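/- arXiv:1005.2812 — 5 statements merged into one kernel-verified Lean document; each statement's English description precedes it below -/
import Mathlib

section
/- Let A be a symmetric n×n matrix over ℤ/2 and let a, b be row vectors of length n, α, β, γ ∈ ℤ/2. Form the (n+2)×(n+2) symmetric matrix M = [[A, aᵀ, bᵀ],[a, α, γ],[b, γ, β]], and let M_a = [[A, aᵀ],[a, α]] and M_b = [[A, bᵀ],[b, β]] be the two (n+1)×(n+1) bordered matrices. If (0,…,0,1) ∈ rowspace(M_a) and (0,…,0,1,0) ∉ rowspace(M), then (0,…,0,1,1) ∈ rowspace(M). -/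
open Matrix

/-- The symmetric bordered matrix `[[A, aᵀ],[a, α]]`. -/
def border {n : ℕ} (A : Matrix (Fin n) (Fin n) (ZMod 2)) (a : Fin n → ZMod 2)
    (α : ZMod 2) : Matrix (Fin n ⊕ Unit) (Fin n ⊕ Unit) (ZMod 2) :=
  Matrix.fromBlocks A (Matrix.of fun i _ => a i) (Matrix.of fun _ j => a j)
    (Matrix.of fun _ _ => α)

/-- The symmetric double-bordered matrix `[[A, aᵀ, bᵀ],[a, α, γ],[b, γ, β]]`;
the index `Sum.inr false` corresponds to the row/column of `a` (position `n+1`),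
and `Sum.inr true` to the row/column of `b` (position `n+2`). -/
def dborder {n : ℕ} (A : Matrix (Fin n) (Fin n) (ZMod 2)) (a b : Fin n → ZMod 2)
    (α β γ : ZMod 2) : Matrix (Fin n ⊕ Bool) (Fin n ⊕ Bool) (ZMod 2) :=
  Matrix.of fun i j =>
    match i, j with
    | Sum.inl i, Sum.inl j => A i j
    | Sum.inl i, Sum.inr false => a i
    | Sum.inl i, Sum.inr true => b i
    | Sum.inr false, Sum.inl j => a j
    | Sum.inr true, Sum.inl j => b j
    | Sum.inr false, Sum.inr false => α
    | Sum.inr true, Sum.inr true => β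
    | Sum.inr false, Sum.inr true => γ
    | Sum.inr true, Sum.inr false => γ

/-- The row space of a matrix: the span of its rows. -/
def rowSpace {m n : Type*} (M : Matrix m n (ZMod 2)) : Submodule (ZMod 2) (n → ZMod 2) :=
  Submodule.span (ZMod 2) (Set.range fun i => M i)

/-- The standard basis row vector `(0,…,0,1)` of length `n+1`. -/
def eLast (n : ℕ) : Fin n ⊕ Unit → ZMod 2 :=
  Sum.elim (fun _ => 0) (fun _ => 1)

/-- The vector `(0,…,0,1,0)` of length `n+2` (1 in position `n+1`). -/
def eA (n : ℕ) : Fin n ⊕ Bool → ZMod 2 :=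
  Sum.elim (fun _ => 0) (fun c => if c then 0 else 1)

/-- The vector `(0,…,0,1,1)` of length `n+2` (1 in the last two positions). -/
def eAB (n : ℕ) : Fin n ⊕ Bool → ZMod 2 :=
  Sum.elim (fun _ => 0) (fun _ => 1)

theorem stmt5 {n : ℕ} (A : Matrix (Fin n) (Fin n) (ZMod 2)) (hA : A.IsSymm)
    (a b : Fin n → ZMod 2) (α β γ : ZMod 2)
    (h1 : eLast n ∈ rowSpace (border A a α))
    (h2 : eA n ∉ rowSpace (dborder A a b α β γ)) :
    eAB n ∈ rowSpace (dborder A a b α β γ) := by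
  classical
  rw [rowSpace, Submodule.mem_span_range_iff_exists_fun] at h1
  obtain ⟨c, hc⟩ := h1
  set M := dborder A a b α β γ with hM
  set d : Fin n ⊕ Bool → ZMod 2 :=
    Sum.elim (fun i => c (Sum.inl i)) (fun bb => if bb then 0 else c (Sum.inr ())) with hd
  have hv : ∑ i, d i • M i ∈ rowSpace M :=
    Submodule.sum_mem _ fun i _ =>
      Submodule.smul_mem _ _ (Submodule.subset_span ⟨i, rfl⟩)
  -- evaluate hc at each coordinate
  have hc' : ∀ j, ∑ i, c i * border A a α i j = eLast n j := by
    intro j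
    have := congrFun hc j
    simpa [Finset.sum_apply] using this
  have hcl : ∀ j : Fin n,
      (∑ i : Fin n, c (Sum.inl i) * A i j) + c (Sum.inr ()) * a j = 0 := by
    intro j
    have := hc' (Sum.inl j)
    simpa [Fintype.sum_sum_type, border, eLast] using this
  have hcr : (∑ i : Fin n, c (Sum.inl i) * a i) + c (Sum.inr ()) * α = 1 := by
    have := hc' (Sum.inr ())
    simpa [Fintype.sum_sum_type, border, eLast] using this
  set s : ZMod 2 := (∑ i : Fin n, c (Sum.inl i) * b i) + c (Sum.inr ()) * γ with hs
  have hval : ∀ j, (∑ i, d i • M i) j =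
      Sum.elim (fun _ : Fin n => (0 : ZMod 2)) (fun bb => if bb then s else 1) j := by
    intro j
    rw [Finset.sum_apply]
    cases j with
    | inl j =>
      simpa [Fintype.sum_sum_type, hd, hM, dborder, smul_eq_mul] using hcl j
    | inr bb =>
      cases bb with
      | false =>
        simpa [Fintype.sum_sum_type, hd, hM, dborder, smul_eq_mul] using hcr
      | true =>
        simp [Fintype.sum_sum_type, hd, hM, dborder, smul_eq_mul, hs]
  have hcases : s = 0 ∨ s = 1 := by
    have : ∀ x : ZMod 2, x = 0 ∨ x = 1 := by decide
    exact this s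
  rcases hcases with h | h
  · exfalso
    apply h2
    have : (∑ i, d i • M i) = eA n := by
      funext j
      rw [hval j]
      cases j with
      | inl j => rfl
      | inr bb => cases bb <;> simp [eA, h]
    rwa [this] at hv
  · have : (∑ i, d i • M i) = eAB n := by
      funext j
      rw [hval j]
      cases j with
      | inl j => rfl
      | inr bb => cases bb <;> simp [eAB, h]
    rwa [this] at hv
end

section
/- Let A be a symmetric n×n matrix over ℤ/2, a and b row vectors of length n, α, β, γ ∈ ℤ/2, and M = [[A, aᵀ, bᵀ],[a, α, γ],[b, γ, β]]. Suppose rank(M) = rank of the (n+1)×(n+2) matrix [[A, aᵀ, bᵀ],[a, α, γ]] (i.e. the last row of M depends on the others), and b does not lie in the row space of A. Then a + b lies in the row space of A. -/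
open Matrix

/-- The `(n+1)×(n+2)` matrix consisting of the first `n+1` rows of the
double-bordered matrix (the rows of `A` followed by the row of `a`). -/
def dborderTop {n : ℕ} (A : Matrix (Fin n) (Fin n) (ZMod 2)) (a b : Fin n → ZMod 2)
    (α β γ : ZMod 2) : Matrix (Fin n ⊕ Unit) (Fin n ⊕ Bool) (ZMod 2) :=
  Matrix.of fun i =>
    match i with
    | Sum.inl i => dborder A a b α β γ (Sum.inl i)
    | Sum.inr _ => dborder A a b α β γ (Sum.inr false)

/-! The rows of `dborderTop` are rows of `dborder`, so equal ranks force equal row spaces and the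
last row `(b, γ, β)` is a combination of the rows `(Aᵢ, aᵢ, bᵢ)` and `(a, α, γ)`. Dropping the two
border coordinates gives `b = c • a + z` with `z ∈ rowSpace A`. As `b ∉ rowSpace A`, `c ≠ 0`;
over `GF(2)` this means `c = 1`, and then `a + b = z`. -/

theorem rowSpace_eq_of_le_of_rank_eq {m m' k : Type*} [Finite m] [Finite m'] [Fintype k]
    {M : Matrix m k (ZMod 2)} {N : Matrix m' k (ZMod 2)} (hle : rowSpace N ≤ rowSpace M)
    (hrank : M.rank = N.rank) : rowSpace N = rowSpace M :=
  Submodule.eq_of_le_of_finrank_eq hle <|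
    (rank_eq_finrank_span_row N).symm.trans (hrank.symm.trans (rank_eq_finrank_span_row M))

theorem Submodule.add_mem_span_of_mem_span_insert {V : Type*} [AddCommGroup V]
    [Module (ZMod 2) V] {s : Set V} {a b : V} (hab : b ∈ span (ZMod 2) (insert a s))
    (hb : b ∉ span (ZMod 2) s) : a + b ∈ span (ZMod 2) s := by
  obtain ⟨c, z, hz, rfl⟩ := mem_span_insert.mp hab
  rcases (by decide : ∀ c : ZMod 2, c = 0 ∨ c = 1) c with rfl | rfl
  · simp_all
  · rwa [one_smul, ← add_assoc, ZModModule.add_self, zero_add]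

section dborder

variable {n : ℕ} (A : Matrix (Fin n) (Fin n) (ZMod 2)) (a b : Fin n → ZMod 2) (α β γ : ZMod 2)

theorem rowSpace_dborderTop_le :
    rowSpace (dborderTop A a b α β γ) ≤ rowSpace (dborder A a b α β γ) := by
  rw [rowSpace, Submodule.span_le]
  rintro _ ⟨i, rfl⟩
  rcases i with i | _
  · exact Submodule.subset_span ⟨Sum.inl i, rfl⟩
  · exact Submodule.subset_span ⟨Sum.inr false, rfl⟩

theorem map_funLeft_inl_rowSpace_dborderTop_le :
    (rowSpace (dborderTop A a b α β γ)).map (LinearMap.funLeft (ZMod 2) (ZMod 2) Sum.inl) ≤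
      Submodule.span (ZMod 2) (insert a (Set.range fun i => A i)) := by
  rw [rowSpace, Submodule.map_span, Submodule.span_le]
  rintro _ ⟨_, ⟨i, rfl⟩, rfl⟩
  rcases i with i | _
  · exact Submodule.subset_span (Or.inr ⟨i, rfl⟩)
  · exact Submodule.subset_span (Or.inl rfl)

end dborder

theorem stmt6_general {n : ℕ} (A : Matrix (Fin n) (Fin n) (ZMod 2))
    (a b : Fin n → ZMod 2) (α β γ : ZMod 2)
    (hrank : (dborder A a b α β γ).rank = (dborderTop A a b α β γ).rank)
    (hb : b ∉ rowSpace A) :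
    a + b ∈ rowSpace A := by
  have hlast : dborder A a b α β γ (Sum.inr true) ∈ rowSpace (dborderTop A a b α β γ) := by
    rw [rowSpace_eq_of_le_of_rank_eq (rowSpace_dborderTop_le A a b α β γ) hrank]
    exact Submodule.subset_span ⟨Sum.inr true, rfl⟩
  have hb' : b ∈ Submodule.span (ZMod 2) (insert a (Set.range fun i => A i)) :=
    map_funLeft_inl_rowSpace_dborderTop_le A a b α β γ (Submodule.mem_map_of_mem hlast)
  exact Submodule.add_mem_span_of_mem_span_insert hb' hb

theorem stmt6 {n : ℕ} (A : Matrix (Fin n) (Fin n) (ZMod 2)) (hA : A.IsSymm)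
    (a b : Fin n → ZMod 2) (α β γ : ZMod 2)
    (hrank : (dborder A a b α β γ).rank = (dborderTop A a b α β γ).rank)
    (hb : b ∉ rowSpace A) :
    a + b ∈ rowSpace A :=
  stmt6_general A a b α β γ hrank hb
end

section
/- Let A be a symmetric n×n matrix over ℤ/2, a a row vector, α ∈ ℤ/2, and B = [[A, aᵀ],[a, α]]. If corank(B) = corank(A) then a ∈ rowspace(A) and (0,…,0,1) ∈ rowspace(B). -/
open Matrix

/-- The corank of a square matrix, as an integer: size minus rank. -/
noncomputable def corankZ {m : Type*} [Fintype m] (M : Matrix m m (ZMod 2)) : ℤ :=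
  (Fintype.card m : ℤ) - M.rank

/-!
Write `B = [R; r]` with `R = [A | aᵀ]` and `r = [a, α]`. Appending a row raises the rank by one
exactly when the row leaves the row space, and `rank R = rank Rᵀ = rank [A; a]` by symmetry of `A`.
If `a` were not a combination of rows of `A`, neither would `r` be one of rows of `R`, and
`rank B = rank A + 2`. So `a = xA`, and then `r ∉ rowSpace R` forces `r - xR = (0, …, 0, β)` with
`β ≠ 0`, i.e. `β = 1` over `ZMod 2`.
-/

open Submodule

namespace Matrix

variable {K m n n₁ n₂ : Type*} [Field K]

theorem span_row_fromRows_replicateRow (M : Matrix m n K) (v : n → K) :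
    span K (Set.range (fromRows M (replicateRow Unit v)).row) =
      span K (Set.range M.row) ⊔ K ∙ v := by
  rw [← span_union]
  congr 1
  change Set.range (Sum.elim M.row fun _ : Unit => v) = _
  rw [Set.Sum.elim_range, Set.range_const]

theorem rank_fromRows_replicateRow_of_mem [Finite m] [Fintype n] {M : Matrix m n K} {v : n → K}
    (hv : v ∈ span K (Set.range M.row)) : (fromRows M (replicateRow Unit v)).rank = M.rank := by
  rw [rank_eq_finrank_span_row, rank_eq_finrank_span_row, span_row_fromRows_replicateRow,
    sup_eq_left.mpr ((span_singleton_le_iff_mem _ _).mpr hv)]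

theorem rank_fromRows_replicateRow_of_notMem [Finite m] [Fintype n] {M : Matrix m n K}
    {v : n → K} (hv : v ∉ span K (Set.range M.row)) :
    (fromRows M (replicateRow Unit v)).rank = M.rank + 1 := by
  rw [rank_eq_finrank_span_row, rank_eq_finrank_span_row, span_row_fromRows_replicateRow,
    finrank_sup_span_singleton hv]

theorem map_funLeft_inl_span_row_fromCols (M : Matrix m n₁ K) (N : Matrix m n₂ K) :
    (span K (Set.range (fromCols M N).row)).map (LinearMap.funLeft K K Sum.inl) =
      span K (Set.range M.row) := by
  rw [map_span, ← Set.range_comp]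
  rfl

theorem mem_span_row_of_mem_span_row_fromCols {M : Matrix m n₁ K} {N : Matrix m n₂ K}
    {v : n₁ ⊕ n₂ → K} (hv : v ∈ span K (Set.range (fromCols M N).row)) :
    v ∘ Sum.inl ∈ span K (Set.range M.row) := by
  rw [← map_funLeft_inl_span_row_fromCols M N]
  exact mem_map_of_mem hv

theorem single_inr_mem_span_row_fromCols_sup [DecidableEq n] {M : Matrix m n K}
    {N : Matrix m Unit K} {v : n ⊕ Unit → K} (hleft : v ∘ Sum.inl ∈ span K (Set.range M.row))
    (hv : v ∉ span K (Set.range (fromCols M N).row)) :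
    Pi.single (Sum.inr ()) 1 ∈ span K (Set.range (fromCols M N).row) ⊔ K ∙ v := by
  rw [← map_funLeft_inl_span_row_fromCols M N] at hleft
  obtain ⟨w, hwS, hw⟩ := hleft
  have hvw_inl : ∀ j, (v - w) (Sum.inl j) = 0 := fun j => sub_eq_zero.mpr (congrFun hw j).symm
  have hvw_inr : (v - w) (Sum.inr ()) ≠ 0 := by
    intro h0
    have hvw : v = w := sub_eq_zero.mp (funext fun | .inl j => hvw_inl j | .inr () => h0)
    exact hv (hvw ▸ hwS)
  have hsingle : Pi.single (Sum.inr ()) 1 = ((v - w) (Sum.inr ()))⁻¹ • (v - w) :=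
    funext fun
      | .inl j => by simp [hvw_inl j]
      | .inr () => by rw [Pi.single_eq_same]; exact (inv_mul_cancel₀ hvw_inr).symm
  rw [hsingle]
  exact smul_mem _ _ (sub_mem (mem_sup_right (mem_span_singleton_self v)) (mem_sup_left hwS))

end Matrix

open Matrix

theorem border_eq_fromRows {n : ℕ} (A : Matrix (Fin n) (Fin n) (ZMod 2)) (a : Fin n → ZMod 2)
    (α : ZMod 2) :
    border A a α = fromRows (fromCols A (replicateCol Unit a))
      (replicateRow Unit (Sum.elim a fun _ => α)) := by
  ext (i | i) (j | j) <;> rfl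

theorem eLast_eq_single (n : ℕ) : eLast n = Pi.single (Sum.inr ()) 1 := by
  ext (j | ⟨⟩) <;> simp [eLast]

theorem stmt10 {n : ℕ} (A : Matrix (Fin n) (Fin n) (ZMod 2)) (hA : A.IsSymm)
    (a : Fin n → ZMod 2) (α : ZMod 2)
    (h : corankZ (border A a α) = corankZ A) :
    a ∈ rowSpace A ∧ eLast n ∈ rowSpace (border A a α) := by
  set R := fromCols A (replicateCol Unit a)
  set r : Fin n ⊕ Unit → ZMod 2 := Sum.elim a fun _ => α
  have hB : border A a α = fromRows R (replicateRow Unit r) := border_eq_fromRows A a α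
  have hrank : (border A a α).rank = A.rank + 1 := by
    simp only [corankZ, Fintype.card_sum, Fintype.card_fin, Fintype.card_unit] at h
    omega
  have hR : R.rank = (fromRows A (replicateRow Unit a)).rank := by
    rw [← rank_transpose, transpose_fromCols, transpose_replicateCol, hA.eq]
  have ha : a ∈ rowSpace A := by
    by_contra ha
    have hr : r ∉ span (ZMod 2) (Set.range R.row) :=
      fun hr => ha (mem_span_row_of_mem_span_row_fromCols hr)
    rw [hB, rank_fromRows_replicateRow_of_notMem hr, hR,
      rank_fromRows_replicateRow_of_notMem ha] at hrank
    omega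
  have hr : r ∉ span (ZMod 2) (Set.range R.row) := by
    intro hr
    rw [hB, rank_fromRows_replicateRow_of_mem hr, hR, rank_fromRows_replicateRow_of_mem ha] at hrank
    omega
  refine ⟨ha, ?_⟩
  rw [eLast_eq_single, rowSpace, hB]
  change _ ∈ span (ZMod 2) (Set.range (fromRows R (replicateRow Unit r)).row)
  rw [span_row_fromRows_replicateRow]
  exact single_inr_mem_span_row_fromCols_sup ha hr
end

section
/- Let G be a labeled simple graph and let G̃ be obtained by adding two new adjacent vertices v, w with identical neighborhoods N ⊆ V(G), both with framing 1. Then for every state s ⊆ V(G): corank A(G̃(s)) = corank A(G(s)), corank A(G̃(s ∪ {v})) = corank A(G̃(s ∪ {w})), and corank A(G̃(s ∪ {v,w})) = corank A(G̃(s ∪ {v})) + 1. -/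
/-!
In `A(G̃)` the rows and columns of `v` and `w` coincide: they have the same neighbourhood and
the corner block is constant. Hence `A(G̃(s ∪ {v}))` and `A(G̃(s ∪ {w}))` are the same matrix,
and `A(G̃(s ∪ {v, w}))` is `A(G̃(s ∪ {v}))` with one row and column duplicated, which leaves
the rank unchanged while the size grows by one.
-/

open Matrix

/-- The framed adjacency matrix of the graph `G̃` obtained from a graph with framed
adjacency matrix `A` by adding two new vertices `v` (index `Sum.inl false`) and `w`
(index `Sum.inl true`) with the same neighbourhood, indicated by the vector `a`,
with the `2×2` corner block constant equal to `d` (so `d = 0` means framing `0`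
and `v, w` non-adjacent; `d = 1` means framing `1` and `v, w` adjacent). -/
def ext2 {n : ℕ} (A : Matrix (Fin n) (Fin n) (ZMod 2)) (a : Fin n → ZMod 2)
    (d : ZMod 2) : Matrix (Bool ⊕ Fin n) (Bool ⊕ Fin n) (ZMod 2) :=
  Matrix.of fun i j =>
    match i, j with
    | Sum.inl _, Sum.inl _ => d
    | Sum.inl _, Sum.inr j => a j
    | Sum.inr i, Sum.inl _ => a i
    | Sum.inr i, Sum.inr j => A i j

theorem Matrix.rank_submatrix_of_rightInverse {R m n m₀ n₀ : Type*} [CommSemiring R]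
    [StrongRankCondition R] [Fintype n] [Fintype n₀] (A : Matrix m n R)
    {r : m₀ → m} {c : n₀ → n} {r' : m → m₀} {c' : n → n₀}
    (hr : Function.RightInverse r' r) (hc : Function.RightInverse c' c) :
    (A.submatrix r c).rank = A.rank := by
  refine (rank_submatrix_le A r c).antisymm ?_
  simpa [submatrix_submatrix, hr.comp_eq_id, hc.comp_eq_id] using
    rank_submatrix_le (A.submatrix r c) r' c'

theorem corankZ_submatrix_of_rightInverse {l m : Type*} [Fintype l] [Fintype m]
    (M : Matrix m m (ZMod 2)) {f : l → m} {g : m → l} (h : Function.RightInverse g f) :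
    corankZ (M.submatrix f f) = corankZ M + (Fintype.card l - Fintype.card m) := by
  rw [corankZ, corankZ, M.rank_submatrix_of_rightInverse h h]
  ring

section ext2

variable {n : ℕ} {l : Type*} (A : Matrix (Fin n) (Fin n) (ZMod 2)) (a : Fin n → ZMod 2)
  (d : ZMod 2) (e : l → Fin n)

theorem ext2_submatrix_inr :
    (ext2 A a d).submatrix (fun i => Sum.inr (e i)) (fun i => Sum.inr (e i)) =
      A.submatrix e e :=
  rfl

theorem ext2_submatrix_inl_eq (b b' : Bool) :
    (ext2 A a d).submatrix (Sum.elim (fun _ : Unit => Sum.inl b) (fun i => Sum.inr (e i)))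
        (Sum.elim (fun _ : Unit => Sum.inl b) (fun i => Sum.inr (e i))) =
      (ext2 A a d).submatrix (Sum.elim (fun _ : Unit => Sum.inl b') (fun i => Sum.inr (e i)))
        (Sum.elim (fun _ : Unit => Sum.inl b') (fun i => Sum.inr (e i))) := by
  ext (i | i) (j | j) <;> rfl

theorem ext2_submatrix_inl_inl :
    (ext2 A a d).submatrix (Sum.elim Sum.inl (fun i => Sum.inr (e i)))
        (Sum.elim Sum.inl (fun i => Sum.inr (e i))) =
      ((ext2 A a d).submatrix (Sum.elim (fun _ : Unit => Sum.inl false) (fun i => Sum.inr (e i)))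
        (Sum.elim (fun _ : Unit => Sum.inl false) (fun i => Sum.inr (e i)))).submatrix
        (Sum.map (fun _ : Bool => ()) id) (Sum.map (fun _ : Bool => ()) id) := by
  ext (i | i) (j | j) <;> rfl

end ext2

theorem stmt13_general {n : ℕ} (A : Matrix (Fin n) (Fin n) (ZMod 2))
    (a : Fin n → ZMod 2) (s : Finset (Fin n)) :
    -- corank A(G̃(s)) = corank A(G(s))
    corankZ ((ext2 A a (1 : ZMod 2)).submatrix
        (fun i : {x // x ∈ s} => Sum.inr i.val) (fun i : {x // x ∈ s} => Sum.inr i.val))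
      = corankZ (A.submatrix (fun i : {x // x ∈ s} => i.val) (fun i : {x // x ∈ s} => i.val)) ∧
    -- corank A(G̃(s ∪ {v})) = corank A(G̃(s ∪ {w}))
    corankZ ((ext2 A a (1 : ZMod 2)).submatrix
        (Sum.elim (fun _ : Unit => Sum.inl false) (fun i : {x // x ∈ s} => Sum.inr i.val))
        (Sum.elim (fun _ : Unit => Sum.inl false) (fun i : {x // x ∈ s} => Sum.inr i.val)))
      = corankZ ((ext2 A a (1 : ZMod 2)).submatrix
        (Sum.elim (fun _ : Unit => Sum.inl true) (fun i : {x // x ∈ s} => Sum.inr i.val))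
        (Sum.elim (fun _ : Unit => Sum.inl true) (fun i : {x // x ∈ s} => Sum.inr i.val))) ∧
    -- corank A(G̃(s ∪ {v,w})) = corank A(G̃(s ∪ {v})) + 1
    corankZ ((ext2 A a (1 : ZMod 2)).submatrix
        (Sum.elim (Sum.inl : Bool → Bool ⊕ Fin n) (fun i : {x // x ∈ s} => Sum.inr i.val))
        (Sum.elim (Sum.inl : Bool → Bool ⊕ Fin n) (fun i : {x // x ∈ s} => Sum.inr i.val)))
      = corankZ ((ext2 A a (1 : ZMod 2)).submatrix
        (Sum.elim (fun _ : Unit => Sum.inl false) (fun i : {x // x ∈ s} => Sum.inr i.val))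
        (Sum.elim (fun _ : Unit => Sum.inl false) (fun i : {x // x ∈ s} => Sum.inr i.val))) + 1 := by
  have collapse_rightInverse : Function.RightInverse (Sum.map (fun _ : Unit => false) id)
      (Sum.map (fun _ : Bool => ()) (id : {x // x ∈ s} → {x // x ∈ s})) := by
    rintro (_ | _) <;> rfl
  refine ⟨congrArg corankZ (ext2_submatrix_inr A a 1 _),
    congrArg corankZ (ext2_submatrix_inl_eq A a 1 _ false true), ?_⟩
  rw [ext2_submatrix_inl_inl, corankZ_submatrix_of_rightInverse _ collapse_rightInverse]
  simp only [Fintype.card_sum, Fintype.card_bool, Fintype.card_unit]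
  push_cast
  ring

theorem stmt13 {n : ℕ} (A : Matrix (Fin n) (Fin n) (ZMod 2)) (hA : A.IsSymm)
    (a : Fin n → ZMod 2) (s : Finset (Fin n)) :
    -- corank A(G̃(s)) = corank A(G(s))
    corankZ ((ext2 A a (1 : ZMod 2)).submatrix
        (fun i : {x // x ∈ s} => Sum.inr i.val) (fun i : {x // x ∈ s} => Sum.inr i.val))
      = corankZ (A.submatrix (fun i : {x // x ∈ s} => i.val) (fun i : {x // x ∈ s} => i.val)) ∧
    -- corank A(G̃(s ∪ {v})) = corank A(G̃(s ∪ {w}))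
    corankZ ((ext2 A a (1 : ZMod 2)).submatrix
        (Sum.elim (fun _ : Unit => Sum.inl false) (fun i : {x // x ∈ s} => Sum.inr i.val))
        (Sum.elim (fun _ : Unit => Sum.inl false) (fun i : {x // x ∈ s} => Sum.inr i.val)))
      = corankZ ((ext2 A a (1 : ZMod 2)).submatrix
        (Sum.elim (fun _ : Unit => Sum.inl true) (fun i : {x // x ∈ s} => Sum.inr i.val))
        (Sum.elim (fun _ : Unit => Sum.inl true) (fun i : {x // x ∈ s} => Sum.inr i.val))) ∧
    -- corank A(G̃(s ∪ {v,w})) = corank A(G̃(s ∪ {v})) + 1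
    corankZ ((ext2 A a (1 : ZMod 2)).submatrix
        (Sum.elim (Sum.inl : Bool → Bool ⊕ Fin n) (fun i : {x // x ∈ s} => Sum.inr i.val))
        (Sum.elim (Sum.inl : Bool → Bool ⊕ Fin n) (fun i : {x // x ∈ s} => Sum.inr i.val)))
      = corankZ ((ext2 A a (1 : ZMod 2)).submatrix
        (Sum.elim (fun _ : Unit => Sum.inl false) (fun i : {x // x ∈ s} => Sum.inr i.val))
        (Sum.elim (fun _ : Unit => Sum.inl false) (fun i : {x // x ∈ s} => Sum.inr i.val))) + 1 :=
  stmt13_general A a s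
end

section
/- Let G be a labeled simple graph and G̃ be obtained from G by the move Ω₄′ at a vertex v of framing 1 and index p: ã_ij = a_ij + a_ip a_jp for i,j ≠ p, and ã_ij = a_ij if i = p or j = p. Then for every state s ⊆ V(G), corank A(G̃(s ⊕ p)) = corank A(G(s)), where s ⊕ p denotes the symmetric difference s △ {v_p}. -/
open Matrix symmDiff

/-- The matrix obtained from `A` by the move `Ω₄′` at the vertex with index `p`:
`ã_ij = a_ij + a_ip a_jp` for `i, j ≠ p`, and `ã_ij = a_ij` if `i = p` or `j = p`. -/
def piv {n : ℕ} (A : Matrix (Fin n) (Fin n) (ZMod 2)) (p : Fin n) :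
    Matrix (Fin n) (Fin n) (ZMod 2) :=
  Matrix.of fun i j => if i = p ∨ j = p then A i j else A i j + A i p * A j p

/-!
For `p ∈ s`, the entry `a_pp = 1` is a pivot of `A(s)`, and one step of Gaussian elimination
on it gives `rank A(s) = 1 + rank S`, where `S` is the Schur complement of `a_pp` on
`s \ {p}`, with entries `a_ij - a_ip a_pj`. Over `𝔽₂`, and with `A` symmetric, `S` is exactly
`Ã(s \ {p})`, so the coranks agree. For `p ∉ s` apply this to `Ã` and `s ∪ {p}`: the move is an
involution and does not change `a_pp`.
-/

theorem Submodule.finrank_prod {K M N : Type*} [DivisionRing K] [AddCommGroup M] [Module K M]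
    [AddCommGroup N] [Module K N] [FiniteDimensional K M] [FiniteDimensional K N]
    (p : Submodule K M) (q : Submodule K N) :
    Module.finrank K (p.prod q) = Module.finrank K p + Module.finrank K q := by
  have hinj : Function.Injective (p.subtype.prodMap q.subtype) := by
    rw [LinearMap.coe_prodMap]
    exact p.injective_subtype.prodMap q.injective_subtype
  rw [← Module.finrank_prod, ← LinearMap.finrank_range_of_inj hinj, LinearMap.range_prodMap,
    Submodule.range_subtype, Submodule.range_subtype]

section Schur

variable {K : Type*} [Field K]

theorem Matrix.rank_fromBlocks_zero_zero {m n : Type*} [Fintype m] [Fintype n]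
    (A : Matrix m m K) (D : Matrix n n K) :
    (fromBlocks A 0 0 D).rank = A.rank + D.rank := by
  let e := LinearEquiv.sumArrowLequivProdArrow m n K K
  have h : (fromBlocks A 0 0 D).mulVecLin
      = (e.symm : ((m → K) × (n → K)) →ₗ[K] _) ∘ₗ A.mulVecLin.prodMap D.mulVecLin ∘ₗ e := by
    refine LinearMap.ext fun x => ?_
    rw [← Sum.elim_comp_inl_inr x]
    simp only [mulVecLin_apply, LinearMap.comp_apply, LinearEquiv.coe_coe, fromBlocks_mulVec,
      zero_mulVec, add_zero, zero_add]
    rfl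
  rw [Matrix.rank, h, LinearMap.range_comp, LinearMap.range_comp_of_range_eq_top _ e.range,
    LinearEquiv.finrank_map_eq, LinearMap.range_prodMap, Submodule.finrank_prod]
  rfl

theorem Matrix.rank_fromBlocks_of_invertible₁₁ {m n : Type*} [Fintype m] [Fintype n]
    [DecidableEq m] [DecidableEq n]
    (A : Matrix m m K) (B : Matrix m n K) (C : Matrix n m K) (D : Matrix n n K) [Invertible A] :
    (fromBlocks A B C D).rank = Fintype.card m + (D - C * ⅟A * B).rank := by
  have hU : IsUnit (fromBlocks 1 (⅟A * B) 0 1 : Matrix (m ⊕ n) (m ⊕ n) K).det := by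
    simp
  have hL : IsUnit (fromBlocks 1 0 (C * ⅟A) 1 : Matrix (m ⊕ n) (m ⊕ n) K).det := by
    simp
  rw [fromBlocks_eq_of_invertible₁₁, rank_mul_eq_left_of_isUnit_det _ _ hU,
    rank_mul_eq_right_of_isUnit_det _ _ hL, rank_fromBlocks_zero_zero,
    rank_of_isUnit A (isUnit_of_invertible A)]

theorem Matrix.rank_eq_one_add_rank_schurComplement {ι : Type*} [Fintype ι] [DecidableEq ι]
    (M : Matrix ι ι K) {p : ι} (hp : M p p ≠ 0) :
    M.rank = 1 + (of fun i j : {i // i ≠ p} => M i j - M i p * (M p p)⁻¹ * M p j).rank := by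
  let e : Unit ⊕ {i // i ≠ p} ≃ ι :=
    (Equiv.sumComm _ _).trans ((Equiv.optionEquivSumPUnit _).symm.trans (Equiv.optionSubtypeNe p))
  let : Invertible fun _ : Unit => M p p :=
    ⟨fun _ => (M p p)⁻¹, funext fun _ => inv_mul_cancel₀ hp, funext fun _ => mul_inv_cancel₀ hp⟩
  let := diagonalInvertible fun _ : Unit => M p p
  have hblocks : M.submatrix e e = fromBlocks (diagonal fun _ => M p p)
      (of fun _ (j : {i // i ≠ p}) => M p j) (of fun (i : {i // i ≠ p}) _ => M i p)
      (of fun (i j : {i // i ≠ p}) => M i j) := by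
    ext (⟨⟩ | i) (⟨⟩ | j) <;> simp [e]
  rw [← rank_submatrix M e e, hblocks, rank_fromBlocks_of_invertible₁₁, Fintype.card_unit]
  congr 2
  ext i j
  simp [mul_apply]

end Schur

def Matrix.principal {ι R : Type*} (M : Matrix ι ι R) (s : Finset ι) : Matrix s s R :=
  M.submatrix Subtype.val Subtype.val

theorem piv_piv {n : ℕ} (A : Matrix (Fin n) (Fin n) (ZMod 2)) (p : Fin n) :
    piv (piv A p) p = A := by
  ext i j
  by_cases h : i = p ∨ j = p
  · simp [piv, h]
  · simp [piv, h, add_assoc, CharTwo.add_self_eq_zero]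

theorem piv_isSymm {n : ℕ} {A : Matrix (Fin n) (Fin n) (ZMod 2)} (hA : A.IsSymm) (p : Fin n) :
    (piv A p).IsSymm := by
  ext i j
  simp only [transpose_apply, piv, of_apply, or_comm (a := j = p), hA.apply j i, mul_comm]

theorem piv_apply_self {n : ℕ} (A : Matrix (Fin n) (Fin n) (ZMod 2)) (p : Fin n) :
    piv A p p p = A p p := by
  simp [piv]

theorem rank_principal_eq_one_add_rank_piv {n : ℕ} {A : Matrix (Fin n) (Fin n) (ZMod 2)}
    (hA : A.IsSymm) {p : Fin n} (hp : A p p = 1) {s : Finset (Fin n)} (hs : p ∈ s) :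
    (A.principal s).rank = 1 + ((piv A p).principal (s.erase p)).rank := by
  let e : {i : s // i ≠ ⟨p, hs⟩} ≃ s.erase p :=
    { toFun i := ⟨i.1, Finset.mem_erase.2 ⟨fun h => i.2 (Subtype.ext h), i.1.2⟩⟩
      invFun i := ⟨⟨i, Finset.mem_of_mem_erase i.2⟩, fun h => Finset.ne_of_mem_erase i.2 congr($h.1)⟩ }
  rw [rank_eq_one_add_rank_schurComplement _ (p := ⟨p, hs⟩) (by simp [principal, hp]),
    ← rank_submatrix _ e e]
  congr 2
  ext i j
  have hi : (i : Fin n) ≠ p := fun h => i.2 (Subtype.ext h)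
  have hj : (j : Fin n) ≠ p := fun h => j.2 (Subtype.ext h)
  simp [e, principal, piv, hi, hj, hp, hA.apply p j, sub_eq_add_neg]

theorem corankZ_piv_principal_erase {n : ℕ} {A : Matrix (Fin n) (Fin n) (ZMod 2)}
    (hA : A.IsSymm) {p : Fin n} (hp : A p p = 1) {s : Finset (Fin n)} (hs : p ∈ s) :
    corankZ ((piv A p).principal (s.erase p)) = corankZ (A.principal s) := by
  have hcard : 1 ≤ s.card := Finset.card_pos.mpr ⟨p, hs⟩
  simp only [corankZ, Fintype.card_coe, Finset.card_erase_of_mem hs,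
    rank_principal_eq_one_add_rank_piv hA hp hs]
  push_cast [Nat.cast_sub hcard]
  ring

theorem Finset.symmDiff_singleton_of_mem {α : Type*} [DecidableEq α] {s : Finset α} {a : α}
    (h : a ∈ s) : s ∆ {a} = s.erase a := by
  ext x
  by_cases hx : x = a <;> simp [mem_symmDiff, hx, h]

theorem Finset.symmDiff_singleton_of_notMem {α : Type*} [DecidableEq α] {s : Finset α} {a : α}
    (h : a ∉ s) : s ∆ {a} = insert a s := by
  ext x
  by_cases hx : x = a <;> simp [mem_symmDiff, hx, h]

/-- Invariance of state coranks under the move `Ω₄′`: if `A` is symmetric with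
`a_pp = 1` (framing of the pivot vertex is `1`), then for every state `s`,
`corank Ã(s ⊕ p) = corank A(s)`, where `s ⊕ p = s △ {p}`. -/
theorem stmt15 {n : ℕ} (A : Matrix (Fin n) (Fin n) (ZMod 2)) (hA : A.IsSymm)
    (p : Fin n) (hp : A p p = 1) (s : Finset (Fin n)) :
    corankZ ((piv A p).submatrix
        (fun i : {x // x ∈ s ∆ ({p} : Finset (Fin n))} => i.val)
        (fun i : {x // x ∈ s ∆ ({p} : Finset (Fin n))} => i.val))
      = corankZ (A.submatrix (fun i : {x // x ∈ s} => i.val)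
          (fun i : {x // x ∈ s} => i.val)) := by
  change corankZ ((piv A p).principal (s ∆ {p})) = corankZ (A.principal s)
  by_cases hs : p ∈ s
  · rw [Finset.symmDiff_singleton_of_mem hs]
    exact corankZ_piv_principal_erase hA hp hs
  · rw [Finset.symmDiff_singleton_of_notMem hs]
    have h := corankZ_piv_principal_erase (piv_isSymm hA p) (by rwa [piv_apply_self])
      (Finset.mem_insert_self p s)
    rwa [piv_piv, Finset.erase_insert hs, eq_comm] at h
end
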